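/- arXiv:1901.06827 — 6 statements merged into one kernel-verified Lean document; each statement's English description precedes it below -/
import Mathlib

section
/- Let n ≥ 3, σ > 0, A_σ = I − σL with L the discrete periodic Laplacian, and B = diag(1, …, 1, −1) ∈ ℝ^{n×n}. Then every positive eigenvalue λ of A_σ^{-1}B satisfies the strict inequalities 1/(1 + 4σ) < λ < 1. -/
open Matrix Polynomial

/-- The discrete one-dimensional Laplacian with periodic boundary conditions:
the circulant matrix whose first column is `(-2, 1, 0, …, 0, 1)ᵀ`. -/
noncomputable def Lmat (n : ℕ) : Matrix (Fin n) (Fin n) ℝ :=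
  Matrix.circulant (fun i : Fin n =>
    if (i : ℕ) = 0 then -2 else if (i : ℕ) = 1 ∨ (i : ℕ) = n - 1 then 1 else 0)

/-- The Laplacian smoothing matrix `A_σ = I - σ L`. -/
noncomputable def Amat (n : ℕ) (σ : ℝ) : Matrix (Fin n) (Fin n) ℝ :=
  1 - σ • Lmat n

/-- The matrix `B = diag(1, …, 1, -1)`. -/
noncomputable def Bmat (n : ℕ) : Matrix (Fin n) (Fin n) ℝ :=
  Matrix.diagonal (fun i : Fin n => if (i : ℕ) = n - 1 then -1 else 1)

lemma shift_sum {n : ℕ} [NeZero n] (f : Fin n → ℝ) (c : Fin n) :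
    ∑ i, f (i + c) = ∑ i, f i :=
  Fintype.sum_equiv (Equiv.addRight c) _ _ (fun _ => rfl)

lemma L_mulVec {n : ℕ} [NeZero n] (hn : 3 ≤ n) (x : Fin n → ℝ) (i : Fin n) :
    (Lmat n).mulVec x i = x (i+1) + x (i-1) - 2 * x i := by
  have h1 : ((1 : Fin n) : ℕ) = 1 := by
    rw [Fin.val_one']; exact Nat.mod_eq_of_lt (by omega)
  have hm1 : ((-1 : Fin n) : ℕ) = n - 1 := by
    rw [Fin.coe_neg, h1]; exact Nat.mod_eq_of_lt (by omega)
  have hc : ∀ k : Fin n,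
      (if (k : ℕ) = 0 then (-2:ℝ) else if (k : ℕ) = 1 ∨ (k : ℕ) = n - 1 then 1 else 0)
      = (if k = 0 then (-2:ℝ) else 0) + (if k = 1 then 1 else 0) + (if k = -1 then 1 else 0) := by
    intro k
    have e0 : (k = 0) ↔ (k : ℕ) = 0 := by rw [Fin.ext_iff]; simp
    have e1 : (k = 1) ↔ (k : ℕ) = 1 := by rw [Fin.ext_iff, h1]
    have e2 : (k = -1) ↔ (k : ℕ) = n - 1 := by rw [Fin.ext_iff, hm1]
    simp only [e0, e1, e2]
    split_ifs <;> first | omega | norm_num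
  have step1 : (Lmat n).mulVec x i = ∑ j, ((if i - j = 0 then (-2:ℝ) else 0)
      + (if i - j = 1 then 1 else 0) + (if i - j = -1 then 1 else 0)) * x j := by
    simp only [Lmat, Matrix.mulVec, Matrix.circulant_apply, dotProduct]
    exact Finset.sum_congr rfl (fun j _ => by rw [hc])
  rw [step1]
  have step2 : ∑ j, ((if i - j = 0 then (-2:ℝ) else 0)
      + (if i - j = 1 then 1 else 0) + (if i - j = -1 then 1 else 0)) * x j
      = ∑ k, ((if k = 0 then (-2:ℝ) else 0)
      + (if k = 1 then 1 else 0) + (if k = -1 then 1 else 0)) * x (i - k) := by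
    refine Fintype.sum_equiv (Equiv.subLeft i) _ _ (fun j => ?_)
    simp [Equiv.subLeft_apply, sub_sub_cancel]
  rw [step2]
  have split : ∀ k : Fin n, ((if k = 0 then (-2:ℝ) else 0)
      + (if k = 1 then 1 else 0) + (if k = -1 then 1 else 0)) * x (i - k)
      = (if k = 0 then (-2:ℝ) * x (i - k) else 0)
      + (if k = 1 then x (i - k) else 0) + (if k = -1 then x (i - k) else 0) := by
    intro k; split_ifs <;> ring
  rw [Finset.sum_congr rfl (fun k _ => split k)]
  rw [Finset.sum_add_distrib, Finset.sum_add_distrib,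
    Finset.sum_ite_eq' Finset.univ (0 : Fin n), Finset.sum_ite_eq' Finset.univ (1 : Fin n),
    Finset.sum_ite_eq' Finset.univ (-1 : Fin n)]
  simp [sub_neg_eq_add]
  ring

lemma reduce {n : ℕ} [NeZero n] (x : Fin n → ℝ) (F : Fin n → ℝ) (c1 c2 c3 c4 c5 c6 : ℝ)
    (h : ∀ i, F i = c1 * x i ^ 2 + c2 * x (i+1) ^ 2 + c3 * x (i-1) ^ 2
      + c4 * (x i * x (i+1)) + c5 * (x i * x (i-1)) + c6 * (x (i+1) * x (i-1))) :
    ∑ i, F i = (c1 + c2 + c3) * (∑ i, x i ^ 2) + (c4 + c5) * (∑ i, x i * x (i+1))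
      + c6 * (∑ i, x (i+1) * x (i-1)) := by
  have r1 : ∑ i, x (i+1) ^ 2 = ∑ i, x i ^ 2 := shift_sum (fun i => x i ^ 2) 1
  have r2 : ∑ i, x (i-1) ^ 2 = ∑ i, x i ^ 2 := by
    have := shift_sum (fun i => x i ^ 2) (-1)
    simpa [sub_eq_add_neg] using this
  have r3 : ∑ i, x i * x (i-1) = ∑ i, x i * x (i+1) := by
    have h' := shift_sum (fun i => x (i+1) * x i) (-1)
    simp only [neg_add_cancel_right] at h'
    simp only [sub_eq_add_neg]
    rw [h']
    exact Finset.sum_congr rfl (fun i _ => mul_comm _ _)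
  calc ∑ i, F i = ∑ i, (c1 * x i ^ 2 + c2 * x (i+1) ^ 2 + c3 * x (i-1) ^ 2
      + c4 * (x i * x (i+1)) + c5 * (x i * x (i-1)) + c6 * (x (i+1) * x (i-1))) :=
        Finset.sum_congr rfl (fun i _ => h i)
    _ = _ := by
      rw [Finset.sum_add_distrib, Finset.sum_add_distrib, Finset.sum_add_distrib,
        Finset.sum_add_distrib, Finset.sum_add_distrib, ← Finset.mul_sum, ← Finset.mul_sum,
        ← Finset.mul_sum, ← Finset.mul_sum, ← Finset.mul_sum, ← Finset.mul_sum, r1, r2, r3]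
      ring

open Fin.NatCast in
lemma const_cycle {n : ℕ} [NeZero n] (f : Fin n → ℝ) (h : ∀ i, f (i + 1) = f i) (i : Fin n) :
    f i = f 0 := by
  have key : ∀ k : ℕ, f (k : Fin n) = f 0 := by
    intro k
    induction k with
    | zero => norm_num
    | succ m ih =>
      have e : ((m + 1 : ℕ) : Fin n) = (m : Fin n) + 1 := by push_cast; ring
      rw [e, h, ih]
  have := key (i : ℕ)
  rwa [Fin.cast_val_eq_self] at this

lemma A_mulVec {n : ℕ} [NeZero n] (hn : 3 ≤ n) (σ : ℝ) (x : Fin n → ℝ) (i : Fin n) :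
    (Amat n σ).mulVec x i = x i - σ * (x (i+1) + x (i-1) - 2 * x i) := by
  rw [Amat, Matrix.sub_mulVec, Matrix.smul_mulVec, Matrix.one_mulVec]
  simp [L_mulVec hn x i]

set_option maxHeartbeats 2000000 in
theorem stmt4 (n : ℕ) (hn : 3 ≤ n) (σ : ℝ) (hσ : 0 < σ) :
    ∀ μ ∈ ((Amat n σ)⁻¹ * Bmat n).charpoly.roots, 0 < μ →
      1 / (1 + 4 * σ) < μ ∧ μ < 1 := by
  haveI : NeZero n := ⟨by omega⟩
  intro μ hμroots hμpos
  set A := Amat n σ with hA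
  set B := Bmat n with hB
  -- quadratic form of A is positive definite
  have hquad : ∀ z : Fin n → ℝ, z ≠ 0 →
      0 < ∑ i, z i * (A.mulVec z) i := by
    intro z hz
    have hN : 0 < ∑ i, z i ^ 2 := by
      obtain ⟨j, hj⟩ := Function.ne_iff.mp hz
      refine Finset.sum_pos' (fun i _ => sq_nonneg _) ⟨j, Finset.mem_univ j, ?_⟩
      have hj' : z j ≠ 0 := by simpa using hj
      positivity
    have hQ : 0 ≤ ∑ i, (z (i+1) - z i) ^ 2 :=
      Finset.sum_nonneg (fun i _ => sq_nonneg _)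
    have h1 : ∑ i, z i * (A.mulVec z) i
        = (1 + 2*σ) * (∑ i, z i ^ 2) + (-2*σ) * (∑ i, z i * z (i+1))
          + 0 * (∑ i, z (i+1) * z (i-1)) := by
      refine reduce z _ (1 + 2*σ) 0 0 (-σ) (-σ) 0 (fun i => ?_) |>.trans (by ring_nf)
      rw [A_mulVec hn σ z i]; ring
    have h2 : ∑ i, (z (i+1) - z i) ^ 2
        = (1 + 1 + 0) * (∑ i, z i ^ 2) + (-2 + 0) * (∑ i, z i * z (i+1))
          + 0 * (∑ i, z (i+1) * z (i-1)) :=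
      reduce z _ 1 1 0 (-2) 0 0 (fun i => by ring)
    nlinarith [hN, hQ, h1, h2, mul_nonneg hσ.le hQ]
  have hdetA : A.det ≠ 0 := by
    intro h
    obtain ⟨v, hv0, hv⟩ := (Matrix.exists_mulVec_eq_zero_iff).2 h
    have := hquad v hv0
    rw [hv] at this
    simp at this
  -- eigenvector
  have hroot : ((A⁻¹ * B).charpoly).IsRoot μ := (Polynomial.mem_roots'.1 hμroots).2
  have hdet : (μ • (1 : Matrix (Fin n) (Fin n) ℝ) - A⁻¹ * B).det = 0 := by
    have he : ((A⁻¹ * B).charpoly).eval μ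
        = ((charmatrix (A⁻¹ * B)).map (Polynomial.evalRingHom μ)).det := by
      rw [Matrix.charpoly, ← Polynomial.coe_evalRingHom, RingHom.map_det]; rfl
    rw [Polynomial.IsRoot, he] at hroot
    rw [← hroot]
    congr 1
    ext i j
    by_cases hij : i = j <;>
      simp [hij, charmatrix_apply, Matrix.one_apply, Matrix.diagonal_apply]
  obtain ⟨x, hx0, hx⟩ := Matrix.exists_mulVec_eq_zero_iff.2 hdet
  have hMx : (A⁻¹ * B).mulVec x = μ • x := by
    rw [Matrix.sub_mulVec, Matrix.smul_mulVec, Matrix.one_mulVec, sub_eq_zero] at hx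
    exact hx.symm
  have hBx : B.mulVec x = μ • (A.mulVec x) := by
    calc B.mulVec x = (A * (A⁻¹ * B)).mulVec x := by
          rw [← Matrix.mul_assoc, Matrix.mul_nonsing_inv _ (isUnit_iff_ne_zero.2 hdetA), one_mul]
      _ = A.mulVec ((A⁻¹ * B).mulVec x) := by rw [Matrix.mulVec_mulVec]
      _ = A.mulVec (μ • x) := by rw [hMx]
      _ = μ • (A.mulVec x) := by rw [Matrix.mulVec_smul]
  set y : Fin n → ℝ := fun i => x i - σ * (x (i+1) + x (i-1) - 2 * x i) with hy
  set ℓ : Fin n := ⟨n - 1, by omega⟩ with hℓ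
  have hiℓ : ∀ i : Fin n, ((i : ℕ) = n - 1) ↔ i = ℓ := by
    intro i; rw [Fin.ext_iff]
  have hP : ∀ i, (if i = ℓ then (-1:ℝ) else 1) * x i = μ * y i := by
    intro i
    have := congrFun hBx i
    rw [hB, Bmat] at this
    rw [Matrix.mulVec_diagonal] at this
    simp only [hiℓ i] at this
    rw [this]
    simp [A_mulVec hn σ x, hy, hA]
  -- basic sums
  set N := ∑ i, x i ^ 2 with hNdef
  set C := ∑ i, x i * x (i+1) with hCdef
  set C2 := ∑ i, x (i+1) * x (i-1) with hC2def
  have hN : 0 < N := by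
    obtain ⟨j, hj⟩ := Function.ne_iff.mp hx0
    refine Finset.sum_pos' (fun i _ => sq_nonneg _) ⟨j, Finset.mem_univ j, ?_⟩
    have hj' : x j ≠ 0 := by simpa using hj
    positivity
  set Q := ∑ i, (x (i+1) - x i) ^ 2 with hQdef
  set P := ∑ i, (x (i+1) + x i) ^ 2 with hPdef
  set G := ∑ i, ((2 * x i + x (i+1) + x (i-1)) ^ 2 + 2 * (x (i+1) - x (i-1)) ^ 2) with hGdef
  have hQ0 : 0 ≤ Q := Finset.sum_nonneg (fun i _ => sq_nonneg _)
  have hP0 : 0 ≤ P := Finset.sum_nonneg (fun i _ => sq_nonneg _)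
  have hG0 : 0 ≤ G := Finset.sum_nonneg (fun i _ => by nlinarith [sq_nonneg (2 * x i + x (i+1) + x (i-1)), sq_nonneg (x (i+1) - x (i-1))])
  have hQr : Q = (1 + 1 + 0) * N + (-2 + 0) * C + 0 * C2 :=
    reduce x _ 1 1 0 (-2) 0 0 (fun i => by ring)
  have hPr : P = (1 + 1 + 0) * N + (2 + 0) * C + 0 * C2 :=
    reduce x _ 1 1 0 2 0 0 (fun i => by ring)
  have hGr : G = (4 + 3 + 3) * N + (4 + 4) * C + (-2) * C2 :=
    reduce x _ 4 3 3 4 4 (-2) (fun i => by ring)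
  have hxyr : ∑ i, x i * y i = ((1 + 2*σ) + 0 + 0) * N + (-σ + -σ) * C + 0 * C2 :=
    reduce x _ (1 + 2*σ) 0 0 (-σ) (-σ) 0 (fun i => by rw [hy]; ring)
  have hSyr : ∑ i, y i ^ 2
      = ((1 + 2*σ)^2 + σ^2 + σ^2) * N + (-(2*σ*(1+2*σ)) + -(2*σ*(1+2*σ))) * C
        + (2*σ^2) * C2 :=
    reduce x _ ((1+2*σ)^2) (σ^2) (σ^2) (-(2*σ*(1+2*σ))) (-(2*σ*(1+2*σ))) (2*σ^2)
      (fun i => by rw [hy]; ring)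
  -- scalar equation 1 : N - 2 x ℓ ^ 2 = μ (N + σ Q)
  have e1 : N - 2 * x ℓ ^ 2 = μ * (∑ i, x i * y i) := by
    have lhs : ∑ i, x i * ((if i = ℓ then (-1:ℝ) else 1) * x i) = N - 2 * x ℓ ^ 2 := by
      have : ∀ i : Fin n, x i * ((if i = ℓ then (-1:ℝ) else 1) * x i)
          = x i ^ 2 - (if i = ℓ then 2 * x i ^ 2 else 0) := by
        intro i; split_ifs <;> ring
      rw [Finset.sum_congr rfl (fun i _ => this i), Finset.sum_sub_distrib,
        Finset.sum_ite_eq' Finset.univ ℓ]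
      simp [hNdef]
    calc N - 2 * x ℓ ^ 2 = ∑ i, x i * ((if i = ℓ then (-1:ℝ) else 1) * x i) := lhs.symm
      _ = ∑ i, μ * (x i * y i) := Finset.sum_congr rfl (fun i _ => by rw [hP i]; ring)
      _ = μ * (∑ i, x i * y i) := by rw [Finset.mul_sum]
  -- scalar equation 2 : N = μ² ∑ y²
  have e2 : N = μ ^ 2 * (∑ i, y i ^ 2) := by
    have lhs : ∑ i, ((if i = ℓ then (-1:ℝ) else 1) * x i) ^ 2 = N := by
      refine Finset.sum_congr rfl (fun i _ => ?_)
      split_ifs <;> ring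
    calc N = ∑ i, ((if i = ℓ then (-1:ℝ) else 1) * x i) ^ 2 := lhs.symm
      _ = ∑ i, μ ^ 2 * y i ^ 2 := Finset.sum_congr rfl (fun i _ => by rw [hP i]; ring)
      _ = μ ^ 2 * (∑ i, y i ^ 2) := by rw [Finset.mul_sum]
  clear_value N C C2 Q P G y ℓ
  constructor
  · -- lower bound
    rw [div_lt_iff₀ (by linarith : (0:ℝ) < 1 + 4 * σ)]
    by_contra hcon
    push_neg at hcon
    have hSy : ∑ i, y i ^ 2 = (1 + 4*σ)^2 * N - (2*σ*P + σ^2*G) := by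
      rw [hSyr, hPr, hGr]; ring
    have hμ4 : 0 < μ * (1 + 4*σ) := mul_pos hμpos (by linarith)
    have h1 : μ^2 * (1 + 4*σ)^2 ≤ 1 := by
      calc μ^2 * (1 + 4*σ)^2 = (μ * (1 + 4*σ))^2 := by ring
        _ ≤ 1^2 := pow_le_pow_left₀ hμ4.le hcon 2
        _ = 1 := one_pow 2
    have h2 : μ^2 * (2*σ*P + σ^2*G) = (μ^2 * (1 + 4*σ)^2 - 1) * N := by
      linear_combination e2 + μ^2 * hSy
    have h3 : (μ^2 * (1 + 4*σ)^2 - 1) * N ≤ 0 :=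
      mul_nonpos_iff.mpr (Or.inr ⟨by linarith, hN.le⟩)
    have hq1 : 0 ≤ μ^2 * (2*σ*P) :=
      mul_nonneg (sq_nonneg μ) (mul_nonneg (by linarith) hP0)
    have hq2 : 0 ≤ μ^2 * (σ^2*G) :=
      mul_nonneg (sq_nonneg μ) (mul_nonneg (sq_nonneg σ) hG0)
    have h5 : μ^2 * (2*σ*P) = 0 := by
      have hexp : μ^2 * (2*σ*P + σ^2*G) = μ^2 * (2*σ*P) + μ^2 * (σ^2*G) := by ring
      linarith
    have hPz : P = 0 := by
      rcases mul_eq_zero.1 h5 with h' | h'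
      · exact absurd h' (by positivity)
      rcases mul_eq_zero.1 h' with h'' | h''
      · exact absurd h'' (by norm_num [hσ.ne'])
      · exact h''
    rw [hPdef] at hPz
    have halt : ∀ i : Fin n, x (i+1) = - x i := by
      intro i
      have := (Finset.sum_eq_zero_iff_of_nonneg (fun i _ => sq_nonneg (x (i+1) + x i))).1
        hPz i (Finset.mem_univ i)
      have := pow_eq_zero_iff (n := 2) (by norm_num) |>.1 this
      linarith
    have hsq : ∀ i : Fin n, (fun j => x j ^ 2) (i + 1) = (fun j => x j ^ 2) i := by
      intro i
      show x (i+1) ^ 2 = x i ^ 2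
      rw [halt i]; ring
    have hconst : ∀ i : Fin n, x i ^ 2 = x 0 ^ 2 := fun i => const_cycle (fun j => x j ^ 2) hsq i
    have hyℓ : y ℓ = (1 + 4*σ) * x ℓ := by
      have h1 := halt ℓ
      have h2 : x ℓ = - x (ℓ - 1) := by
        have := halt (ℓ - 1)
        rw [sub_add_cancel] at this
        rw [this]
      have hyd : y ℓ = x ℓ - σ * (x (ℓ+1) + x (ℓ-1) - 2 * x ℓ) := by rw [hy]
      rw [hyd, h1, show x (ℓ - 1) = - x ℓ by rw [h2]; ring]
      ring
    have hxℓ : x ℓ = 0 := by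
      have hPe := hP ℓ
      rw [if_pos rfl, hyℓ] at hPe
      have hf : (1 + μ * (1 + 4*σ)) * x ℓ = 0 := by linear_combination -hPe
      rcases mul_eq_zero.1 hf with h' | h'
      · exact absurd h' (by nlinarith [hμ4])
      · exact h'
    have : x = 0 := by
      funext i
      have h9 : x i ^ 2 = 0 := by rw [hconst i, ← hconst ℓ, hxℓ]; ring
      simpa using pow_eq_zero_iff (n := 2) (by norm_num) |>.1 h9
    exact hx0 this
  · -- upper bound
    have key : 0 < 2 * x ℓ ^ 2 + σ * Q := by
      rcases lt_or_eq_of_le (add_nonneg (by positivity) (mul_nonneg hσ.le hQ0) :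
        (0:ℝ) ≤ 2 * x ℓ ^ 2 + σ * Q) with h | h
      · exact h
      exfalso
      have hσQ : σ * Q = 0 := by linarith [sq_nonneg (x ℓ), mul_nonneg hσ.le hQ0]
      have hQz : Q = 0 := by
        rcases mul_eq_zero.1 hσQ with h' | h'
        · exact absurd h' hσ.ne'
        · exact h'
      have hxsq : x ℓ ^ 2 = 0 := by linarith [sq_nonneg (x ℓ)]
      have hxℓ : x ℓ = 0 := pow_eq_zero_iff (n := 2) (by norm_num) |>.1 hxsq
      rw [hQdef] at hQz
      have heq : ∀ i : Fin n, x (i+1) = x i := by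
        intro i
        have := (Finset.sum_eq_zero_iff_of_nonneg (fun i _ => sq_nonneg (x (i+1) - x i))).1
          hQz i (Finset.mem_univ i)
        have := pow_eq_zero_iff (n := 2) (by norm_num) |>.1 this
        linarith
      have hconst : ∀ i : Fin n, x i = x 0 := fun i => const_cycle x heq i
      have : x = 0 := by
        funext i
        have h2 : x i = x ℓ := (hconst i).trans (hconst ℓ).symm
        rw [hxℓ] at h2
        simpa using h2
      exact hx0 this
    have e1' : N - 2 * x ℓ ^ 2 = μ * (N + σ * Q) := by
      rw [e1, hxyr]
      have : N + σ * Q = ((1 + 2*σ) + 0 + 0) * N + (-σ + -σ) * C + 0 * C2 := by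
        rw [hQr]; ring
      rw [this]
    nlinarith [hN, hQ0, mul_nonneg hσ.le hQ0]
end

section
/- Let n ≥ 3, σ > 0, A_σ = I − σL with L the discrete periodic Laplacian, and B = diag(1, …, 1, −1). Let p ∈ ℝⁿ be a nonzero eigenvector of A_σ^{-1}B associated with a negative eigenvalue. Then all entries of p are nonzero and have the same sign; moreover p satisfies the symmetry p_l = p_{n−l} for l = 1, …, n − 1, and its last entry p_n is nonzero. -/
open Matrix Polynomial

open scoped Fin.CommRing Fin.NatCast

lemma chain_nonneg (n : ℕ) (q : ℕ → ℝ) (c d : ℝ) (hd : 0 < d) (hcd : 2*d < c)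
    (heq : ∀ j, 1 ≤ j → j ≤ n-1 → c * q j = d * (q (j-1) + q (j+1)))
    (hqn : q n = q 0) (h0 : 0 ≤ q 0) : ∀ j ≤ n, 0 ≤ q j := by
  classical
  by_contra hcon
  push_neg at hcon
  obtain ⟨j1, hj1n, hj1⟩ := hcon
  set m : ℝ := (Finset.range (n+1)).inf' (by simp) q with hm
  have hmle : ∀ k ≤ n, m ≤ q k := fun k hk =>
    Finset.inf'_le q (by simp [Nat.lt_succ_iff, hk])
  have hmneg : m < 0 := lt_of_le_of_lt (hmle j1 hj1n) hj1
  have hex : ∃ j, j ≤ n ∧ q j = m := by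
    obtain ⟨j, hj, hjq⟩ := Finset.exists_mem_eq_inf' (s := Finset.range (n+1)) (by simp) q
    exact ⟨j, by simpa [Nat.lt_succ_iff] using hj, hjq.symm⟩
  set j0 := Nat.find hex with hj0def
  obtain ⟨hj0n, hj0q⟩ := Nat.find_spec hex
  have h0' : q 0 ≠ m := fun h => absurd (h ▸ h0) (not_le.mpr hmneg)
  have hj0pos : 1 ≤ j0 := by
    rcases Nat.eq_zero_or_pos j0 with h | h
    · exact absurd (h ▸ hj0q) h0'
    · exact h
  have hj0lt : j0 ≤ n - 1 := by
    rcases Nat.lt_or_ge j0 n with h | h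
    · omega
    · have hjn : j0 = n := le_antisymm hj0n h
      exact absurd (by rw [← hqn, ← hjn]; exact hj0q) h0'
  have hrec := heq j0 hj0pos hj0lt
  have hl : m ≤ q (j0 - 1) := hmle _ (by omega)
  have hr : m ≤ q (j0 + 1) := hmle _ (by omega)
  have : c * m ≥ d * (2 * m) := by
    rw [hj0q] at hrec
    rw [hrec]
    nlinarith
  nlinarith

lemma chain_zero (n : ℕ) (q : ℕ → ℝ) (c d : ℝ) (hd : 0 < d) (hcd : 2*d < c)
    (heq : ∀ j, 1 ≤ j → j ≤ n-1 → c * q j = d * (q (j-1) + q (j+1)))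
    (hqn : q n = q 0) (h0 : q 0 = 0) : ∀ j ≤ n, q j = 0 := by
  have h1 := chain_nonneg n q c d hd hcd heq hqn (le_of_eq h0.symm)
  have h2 := chain_nonneg n (fun j => -q j) c d hd hcd
    (fun j hj1 hj2 => by linear_combination -heq j hj1 hj2)
    (by simp [hqn]) (by simp [h0])
  intro j hj
  have := h1 j hj
  have := h2 j hj
  linarith

lemma chain_pos (n : ℕ) (q : ℕ → ℝ) (c d : ℝ) (hd : 0 < d) (hcd : 2*d < c)
    (heq : ∀ j, 1 ≤ j → j ≤ n-1 → c * q j = d * (q (j-1) + q (j+1)))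
    (hqn : q n = q 0) (h0 : 0 < q 0) : ∀ j ≤ n, 0 < q j := by
  classical
  have hnn := chain_nonneg n q c d hd hcd heq hqn h0.le
  by_contra hcon
  push_neg at hcon
  obtain ⟨j1, hj1n, hj1⟩ := hcon
  have hex : ∃ j, j ≤ n ∧ q j = 0 := ⟨j1, hj1n, le_antisymm hj1 (hnn j1 hj1n)⟩
  set j0 := Nat.find hex with hj0def
  obtain ⟨hj0n, hj0q⟩ := Nat.find_spec hex
  rw [← hj0def] at hj0n hj0q
  have hj0pos : 1 ≤ j0 := by
    rcases Nat.eq_zero_or_pos j0 with h | h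
    · rw [h] at hj0q; linarith
    · exact h
  have hj0lt : j0 ≤ n - 1 := by
    rcases Nat.lt_or_ge j0 n with h | h
    · omega
    · have hjn : j0 = n := le_antisymm hj0n h
      rw [hjn, hqn] at hj0q; linarith
  have hrec := heq j0 hj0pos hj0lt
  rw [hj0q, mul_zero] at hrec
  have hl := hnn (j0-1) (by omega)
  have hr := hnn (j0+1) (by omega)
  have hql : q (j0 - 1) = 0 := by nlinarith
  exact Nat.find_min hex (by omega : j0 - 1 < j0) ⟨by omega, hql⟩

lemma lap_mulVec (n : ℕ) [NeZero n] (hn : 3 ≤ n) (p : Fin n → ℝ) (i : Fin n) :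
    (Lmat n).mulVec p i = -2 * p i + p (i - 1) + p (i + 1) := by
  have hone : ((1 : Fin n) : ℕ) = 1 := by
    rw [Fin.val_one']; exact Nat.mod_eq_of_lt (by omega)
  have hneg : ((-1 : Fin n) : ℕ) = n - 1 := by
    rw [Fin.coe_neg, hone]; exact Nat.mod_eq_of_lt (by omega)
  have e0 : ∀ j : Fin n, ((i - j : Fin n) : ℕ) = 0 ↔ j = i := by
    intro j
    rw [show (0:ℕ) = ((0 : Fin n) : ℕ) from rfl, ← Fin.ext_iff, sub_eq_zero, eq_comm]
  have e1 : ∀ j : Fin n, ((i - j : Fin n) : ℕ) = 1 ↔ j = i - 1 := by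
    intro j
    rw [show (1:ℕ) = ((1 : Fin n) : ℕ) from hone.symm, ← Fin.ext_iff]
    constructor
    · intro h; linear_combination -h
    · intro h; linear_combination -h
  have e2 : ∀ j : Fin n, ((i - j : Fin n) : ℕ) = n - 1 ↔ j = i + 1 := by
    intro j
    rw [show (n-1:ℕ) = ((-1 : Fin n) : ℕ) from hneg.symm, ← Fin.ext_iff]
    constructor
    · intro h; linear_combination -h
    · intro h; linear_combination -h
  have h2val : ((2 : Fin n) : ℕ) = 2 := by
    rw [show (2 : Fin n) = ((2 : ℕ) : Fin n) by norm_cast, Fin.val_natCast]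
    exact Nat.mod_eq_of_lt (by omega)
  have hd1 : i ≠ i - 1 := by
    intro h
    have h1 : (1 : Fin n) = 0 := by linear_combination h
    have := congrArg Fin.val h1
    rw [hone] at this
    simp at this
  have hd2 : i ≠ i + 1 := by
    intro h
    have h1 : (1 : Fin n) = 0 := by linear_combination -h
    have := congrArg Fin.val h1
    rw [hone] at this
    simp at this
  have hd3 : (i - 1 : Fin n) ≠ i + 1 := by
    intro h
    have h1 : (2 : Fin n) = 0 := by linear_combination -h
    have := congrArg Fin.val h1
    rw [h2val] at this
    simp at this
  have hsum : ∀ j : Fin n,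
      (if ((i - j : Fin n) : ℕ) = 0 then (-2:ℝ)
        else if ((i - j : Fin n) : ℕ) = 1 ∨ ((i - j : Fin n) : ℕ) = n - 1 then 1 else 0) * p j
      = (if j = i then -2 * p i else 0) + (if j = i - 1 then p (i-1) else 0)
        + (if j = i + 1 then p (i+1) else 0) := by
    intro j
    simp only [e0 j, e1 j, e2 j]
    by_cases h0 : j = i
    · subst h0
      rw [if_pos rfl, if_pos rfl, if_neg (fun h => hd1 h), if_neg (fun h => hd2 h)]
      ring
    · rw [if_neg h0, if_neg h0]
      by_cases hA : j = i - 1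
      · subst hA
        rw [if_pos (Or.inl rfl), if_pos rfl, if_neg hd3]
        ring
      · rw [if_neg hA]
        by_cases hB : j = i + 1
        · subst hB
          rw [if_pos (Or.inr rfl), if_pos rfl]
          ring
        · rw [if_neg (by tauto : ¬(j = i - 1 ∨ j = i + 1)), if_neg hB]
          ring
  show ∑ j, (Lmat n) i j * p j = _
  simp only [Lmat, Matrix.circulant_apply]
  rw [Finset.sum_congr rfl (fun j _ => hsum j)]
  rw [Finset.sum_add_distrib, Finset.sum_add_distrib,
    Finset.sum_ite_eq' Finset.univ i (fun _ => -2 * p i),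
    Finset.sum_ite_eq' Finset.univ (i-1) (fun _ => p (i-1)),
    Finset.sum_ite_eq' Finset.univ (i+1) (fun _ => p (i+1))]
  simp

theorem stmt7 (n : ℕ) (hn : 3 ≤ n) (σ : ℝ) (hσ : 0 < σ) (p : Fin n → ℝ) (hp : p ≠ 0)
    (lam : ℝ) (hlam : lam < 0)
    (heig : ((Amat n σ)⁻¹ * Bmat n).mulVec p = lam • p) :
    -- all entries of `p` are nonzero and have the same sign:
    ((∀ i, 0 < p i) ∨ (∀ i, p i < 0)) ∧
    -- `p` satisfies the symmetry `p_l = p_{n-l}` for `l = 1, …, n-1`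
    -- (zero-based: `p i = p j` whenever `i + j = n - 2`):
    (∀ i j : Fin n, (i : ℕ) + (j : ℕ) = n - 2 → p i = p j) ∧
    -- and its last entry `p_n` is nonzero:
    ∀ i : Fin n, (i : ℕ) = n - 1 → p i ≠ 0 := by
  classical
  haveI : NeZero n := ⟨by omega⟩
  by_cases hA : IsUnit (Amat n σ).det
  swap
  · rw [Matrix.nonsing_inv_apply_not_isUnit _ hA, Matrix.zero_mul, Matrix.zero_mulVec] at heig
    exact absurd ((smul_eq_zero.mp heig.symm).resolve_left (ne_of_lt hlam)) hp
  have hBA : (Bmat n).mulVec p = lam • (Amat n σ).mulVec p := by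
    have h := congrArg (fun v => (Amat n σ).mulVec v) heig
    simp only [Matrix.mulVec_mulVec, Matrix.mulVec_smul] at h
    rwa [← Matrix.mul_assoc, Matrix.mul_nonsing_inv _ hA, Matrix.one_mul] at h
  have hcomp : ∀ i : Fin n, (if (i:ℕ) = n - 1 then -p i else p i)
      = lam * (p i - σ * (-2 * p i + p (i - 1) + p (i + 1))) := by
    intro i
    have h1 := congrFun hBA i
    rw [Bmat, Matrix.mulVec_diagonal] at h1
    rw [Amat, Matrix.sub_mulVec, Matrix.one_mulVec, Matrix.smul_mulVec] at h1
    simpa [Pi.smul_apply, smul_eq_mul, lap_mulVec n hn p i] using h1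
  set μ : ℝ := -lam with hμ
  have hμpos : 0 < μ := by simp [hμ]; linarith
  set c : ℝ := 1 + μ * (1 + 2*σ) with hc
  set d : ℝ := μ * σ with hdd
  have hd : 0 < d := mul_pos hμpos hσ
  have hcd : 2*d < c := by rw [hc, hdd]; nlinarith
  set q : ℕ → ℝ := fun j => p ((n - 1 + j : ℕ) : Fin n) with hqdef
  have hcast : ∀ a : ℕ, ((a + n : ℕ) : Fin n) = ((a : ℕ) : Fin n) := fun a => by
    rw [Nat.cast_add, Fin.natCast_self, add_zero]
  have hqn : q n = q 0 := by
    simp only [hqdef]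
    rw [show n - 1 + n = (n - 1 + 0) + n by omega, hcast]
  have hqshift : ∀ i : Fin n, p i = q ((i : ℕ) + 1) := by
    intro i
    have h : ((n - 1 + ((i:ℕ)+1) : ℕ) : Fin n) = i := by
      rw [show n - 1 + ((i:ℕ)+1) = (i:ℕ) + n by omega, hcast, Fin.cast_val_eq_self]
    simp only [hqdef, h]
  have hint : ∀ j, 1 ≤ j → j ≤ n - 1 → c * q j = d * (q (j-1) + q (j+1)) := by
    intro j h1 h2
    set i : Fin n := ((n - 1 + j : ℕ) : Fin n) with hi
    have hival : (i : ℕ) = j - 1 := by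
      rw [hi, Fin.val_natCast, show n - 1 + j = (j-1) + n by omega, Nat.add_mod_right]
      exact Nat.mod_eq_of_lt (by omega)
    have hiub : ¬((i:ℕ) = n - 1) := by omega
    have hstep : ∀ a : ℕ, ((a + 1 : ℕ) : Fin n) = ((a:ℕ) : Fin n) + 1 := fun a => by
      push_cast; ring
    have hsub : ((n - 1 + (j-1) : ℕ) : Fin n) = i - 1 := by
      rw [hi, show n - 1 + j = (n - 1 + (j-1)) + 1 by omega, hstep]
      ring
    have hadd : ((n - 1 + (j+1) : ℕ) : Fin n) = i + 1 := by
      rw [hi, show n - 1 + (j+1) = (n - 1 + j) + 1 by omega, hstep]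
    have hcp := hcomp i
    rw [if_neg hiub] at hcp
    simp only [hqdef, hsub, hadd, ← hi]
    rw [hc, hdd, hμ]
    linear_combination hcp
  have hq0 : q 0 ≠ 0 := by
    intro h
    have hz := chain_zero n q c d hd hcd hint hqn h
    apply hp
    funext i
    rw [hqshift i]
    exact hz _ (by have := i.isLt; omega)
  refine ⟨?_, ?_, ?_⟩
  · rcases lt_or_gt_of_ne hq0 with hneg | hpos
    · right; intro i
      have hp2 := chain_pos n (fun j => -q j) c d hd hcd
        (fun j a b => by linear_combination -hint j a b)
        (by simp [hqn]) (by simpa using hneg) ((i:ℕ)+1) (by have := i.isLt; omega)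
      rw [hqshift i]; linarith
    · left; intro i
      have hp2 := chain_pos n q c d hd hcd hint hqn hpos ((i:ℕ)+1) (by have := i.isLt; omega)
      rw [hqshift i]; exact hp2
  · have hsym : ∀ j ≤ n, q j = q (n - j) := by
      set s : ℕ → ℝ := fun j => q j - q (n - j) with hs
      have heqs : ∀ j, 1 ≤ j → j ≤ n-1 → c * s j = d * (s (j-1) + s (j+1)) := by
        intro j h1 h2
        have e1 := hint j h1 h2
        have e2 := hint (n - j) (by omega) (by omega)
        simp only [hs]
        rw [show n - (j-1) = (n-j)+1 by omega, show n - (j+1) = (n-j)-1 by omega]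
        linear_combination e1 - e2
      have hsn : s n = s 0 := by
        simp only [hs, Nat.sub_self, Nat.sub_zero, hqn]
      have hz := chain_zero n s c d hd hcd heqs hsn (by simp only [hs, Nat.sub_zero, hqn]; ring)
      intro j hj
      have := hz j hj
      simp only [hs] at this
      linarith
    intro i j hij
    rw [hqshift i, hqshift j, hsym ((i:ℕ)+1) (by have := i.isLt; omega)]
    congr 1
    have := i.isLt; have := j.isLt
    omega
  · intro i hi
    have hpi : p i = q 0 := by
      rw [hqshift i, hi, show n - 1 + 1 = n by omega, hqn]
    rw [hpi]; exact hq0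
end

section
/- Let n ≥ 3, let L be the discrete periodic Laplacian, A_σ = I − σL, and B = diag(1, …, 1, −1). Let σ₁, σ₂ ≥ 0 with σ₁ ≠ σ₂, and let p, q ∈ ℝⁿ be nonzero vectors with A_{σ₁}^{-1} B p = λ₁ p and A_{σ₂}^{-1} B q = λ₂ q for some negative eigenvalues λ₁ < 0 and λ₂ < 0. Then the Euclidean inner product ⟨p, q⟩ is nonzero; i.e., eigenvectors corresponding to the unique negative eigenvalue at two different smoothing parameters are never orthogonal. -/
open Matrix Polynomial

/-!
For `σ ≥ 0` the matrix `A_σ` is positive definite, because `xᵀ L x = -∑ (x (i+1) - x i)²`.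
An eigenvector `p` of `A_σ⁻¹ B` with eigenvalue `λ < 0` thus satisfies `pᵀ B p = λ pᵀ A_σ p < 0`,
i.e. `∑_{i < n-1} p_i² < p_{n-1}²`: `p` is timelike for the Lorentzian form `B`. For two
timelike vectors, Cauchy–Schwarz on the first `n - 1` coordinates gives
`|∑_{i < n-1} p_i q_i| < |p_{n-1} q_{n-1}|`, so `p ⬝ᵥ q ≠ 0`.
-/

open Finset

lemma Lmat_mulVec_apply (m : ℕ) (x : Fin (m + 3) → ℝ) (i : Fin (m + 3)) :
    (Lmat (m + 3) *ᵥ x) i = x (i - 1) - 2 * x i + x (i + 1) := by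
  have hc : ∀ k : Fin (m + 3),
      (if (k : ℕ) = 0 then -2 else if (k : ℕ) = 1 ∨ (k : ℕ) = m + 3 - 1 then 1 else 0 : ℝ) =
        (if k = 0 then -2 else 0) + (if k = 1 then 1 else 0) + (if k = -1 then 1 else 0) := by
    intro k
    simp only [Fin.ext_iff, Fin.val_zero, Fin.val_one, Fin.coe_neg_one]
    split_ifs <;> first | omega | norm_num
  calc (Lmat (m + 3) *ᵥ x) i = ∑ k : Fin (m + 3), (if (k : ℕ) = 0 then -2
        else if (k : ℕ) = 1 ∨ (k : ℕ) = m + 3 - 1 then 1 else 0 : ℝ) * x (i - k) :=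
        Fintype.sum_equiv (Equiv.subLeft i) _ _ (fun j => by simp [Lmat])
    _ = x (i - 1) - 2 * x i + x (i + 1) := by
        simp only [hc, add_mul, ite_mul, zero_mul, sum_add_distrib, sum_ite_eq', mem_univ,
          if_true, sub_zero, sub_neg_eq_add]
        ring

lemma dotProduct_Lmat_mulVec_self (m : ℕ) (x : Fin (m + 3) → ℝ) :
    x ⬝ᵥ Lmat (m + 3) *ᵥ x = -∑ i, (x (i + 1) - x i) ^ 2 := by
  have hshift : ∑ i, x i * x (i - 1) = ∑ i, x (i + 1) * x i :=
    (Fintype.sum_equiv (Equiv.addRight 1) _ _ (fun i => by simp [mul_comm])).symm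
  have hsq : ∑ i, x (i + 1) ^ 2 = ∑ i, x i ^ 2 :=
    Fintype.sum_equiv (Equiv.addRight 1) _ _ (fun i => rfl)
  simp only [dotProduct, Lmat_mulVec_apply]
  rw [eq_neg_iff_add_eq_zero, ← sum_add_distrib]
  calc ∑ i, (x i * (x (i - 1) - 2 * x i + x (i + 1)) + (x (i + 1) - x i) ^ 2)
      = ∑ i, (x i * x (i - 1) - x (i + 1) * x i) + ∑ i, (x (i + 1) ^ 2 - x i ^ 2) := by
        rw [← sum_add_distrib]
        exact sum_congr rfl fun i _ => by ring
    _ = 0 := by rw [sum_sub_distrib, sum_sub_distrib, hshift, hsq]; ring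

lemma dotProduct_Lmat_mulVec_self_nonpos {n : ℕ} (hn : 3 ≤ n) (x : Fin n → ℝ) :
    x ⬝ᵥ Lmat n *ᵥ x ≤ 0 := by
  obtain ⟨m, rfl⟩ : ∃ m, n = m + 3 := ⟨n - 3, by omega⟩
  rw [dotProduct_Lmat_mulVec_self, neg_nonpos]
  exact sum_nonneg fun i _ => sq_nonneg _

lemma dotProduct_Amat_mulVec_self_pos {n : ℕ} (hn : 3 ≤ n) {σ : ℝ} (hσ : 0 ≤ σ)
    {x : Fin n → ℝ} (hx : x ≠ 0) : 0 < x ⬝ᵥ Amat n σ *ᵥ x := by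
  have hL := dotProduct_Lmat_mulVec_self_nonpos hn x
  have hx' : 0 < x ⬝ᵥ x := by simpa using dotProduct_self_star_pos_iff.2 hx
  rw [Amat, sub_mulVec, one_mulVec, smul_mulVec, dotProduct_sub, dotProduct_smul, smul_eq_mul]
  nlinarith

lemma isUnit_det_Amat {n : ℕ} (hn : 3 ≤ n) {σ : ℝ} (hσ : 0 ≤ σ) : IsUnit (Amat n σ).det := by
  refine isUnit_iff_ne_zero.2 fun hdet => ?_
  obtain ⟨x, hx, hAx⟩ := exists_mulVec_eq_zero_iff.2 hdet
  simpa [hAx] using dotProduct_Amat_mulVec_self_pos hn hσ hx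

lemma mulVec_eq_smul_mulVec_of_nonsing_inv_mul {ι R : Type*} [Fintype ι] [DecidableEq ι]
    [CommRing R] {A B : Matrix ι ι R} (hA : IsUnit A.det) {p : ι → R} {μ : R}
    (h : (A⁻¹ * B) *ᵥ p = μ • p) : B *ᵥ p = μ • A *ᵥ p := by
  have := congrArg (A *ᵥ ·) h
  simpa only [mulVec_mulVec, ← Matrix.mul_assoc, mul_nonsing_inv _ hA, Matrix.one_mul,
    mulVec_smul] using this

lemma dotProduct_Bmat_mulVec_self (m : ℕ) (p : Fin (m + 1) → ℝ) :
    p ⬝ᵥ Bmat (m + 1) *ᵥ p = ∑ i ∈ univ.erase (Fin.last m), p i ^ 2 - p (Fin.last m) ^ 2 := by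
  have hB : ∀ i, p i * (Bmat (m + 1) *ᵥ p) i = (if i = Fin.last m then -1 else 1) * p i ^ 2 := by
    intro i
    simp only [Bmat, mulVec_diagonal, Fin.ext_iff, Fin.val_last, add_tsub_cancel_right]
    ring
  rw [dotProduct, ← add_sum_erase _ _ (mem_univ (Fin.last m)), hB, if_pos rfl,
    sum_congr rfl fun i hi => by rw [hB, if_neg (ne_of_mem_erase hi), one_mul]]
  ring

lemma dotProduct_ne_zero_of_sum_erase_sq_lt {ι : Type*} [Fintype ι] [DecidableEq ι]
    {p q : ι → ℝ} (j : ι) (hp : ∑ i ∈ univ.erase j, p i ^ 2 < p j ^ 2)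
    (hq : ∑ i ∈ univ.erase j, q i ^ 2 < q j ^ 2) : p ⬝ᵥ q ≠ 0 := by
  intro h
  rw [dotProduct, ← add_sum_erase _ _ (mem_univ j), add_eq_zero_iff_eq_neg'] at h
  have hCS := sum_mul_sq_le_sq_mul_sq (univ.erase j) p q
  rw [h] at hCS
  have hP : 0 ≤ ∑ i ∈ univ.erase j, p i ^ 2 := sum_nonneg fun i _ => sq_nonneg _
  have hQ : 0 ≤ ∑ i ∈ univ.erase j, q i ^ 2 := sum_nonneg fun i _ => sq_nonneg _
  nlinarith [mul_le_mul_of_nonneg_left hq.le hP]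

lemma sum_erase_last_sq_lt_of_neg_eigenvalue {m : ℕ} {σ : ℝ} (hσ : 0 ≤ σ)
    {p : Fin (m + 3) → ℝ} (hp : p ≠ 0) {μ : ℝ} (hμ : μ < 0)
    (h : ((Amat (m + 3) σ)⁻¹ * Bmat (m + 3)) *ᵥ p = μ • p) :
    ∑ i ∈ univ.erase (Fin.last (m + 2)), p i ^ 2 < p (Fin.last (m + 2)) ^ 2 := by
  have hn : 3 ≤ m + 3 := Nat.le_add_left 3 m
  have hA := isUnit_det_Amat hn hσ
  have hB : p ⬝ᵥ Bmat (m + 3) *ᵥ p = μ * (p ⬝ᵥ Amat (m + 3) σ *ᵥ p) := by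
    rw [mulVec_eq_smul_mulVec_of_nonsing_inv_mul hA h, dotProduct_smul, smul_eq_mul]
  have := mul_neg_of_neg_of_pos hμ (dotProduct_Amat_mulVec_self_pos hn hσ hp)
  rw [← hB, dotProduct_Bmat_mulVec_self] at this
  linarith

theorem stmt8_general (n : ℕ) (hn : 3 ≤ n) (σ₁ σ₂ : ℝ) (h1 : 0 ≤ σ₁) (h2 : 0 ≤ σ₂)
    (p q : Fin n → ℝ) (hp : p ≠ 0) (hq : q ≠ 0)
    (lam₁ lam₂ : ℝ) (hlam₁ : lam₁ < 0) (hlam₂ : lam₂ < 0)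
    (e₁ : ((Amat n σ₁)⁻¹ * Bmat n).mulVec p = lam₁ • p)
    (e₂ : ((Amat n σ₂)⁻¹ * Bmat n).mulVec q = lam₂ • q) :
    p ⬝ᵥ q ≠ 0 := by
  obtain ⟨m, rfl⟩ : ∃ m, n = m + 3 := ⟨n - 3, by omega⟩
  exact dotProduct_ne_zero_of_sum_erase_sq_lt _
    (sum_erase_last_sq_lt_of_neg_eigenvalue h1 hp hlam₁ e₁)
    (sum_erase_last_sq_lt_of_neg_eigenvalue h2 hq hlam₂ e₂)

theorem stmt8 (n : ℕ) (hn : 3 ≤ n) (σ₁ σ₂ : ℝ) (h1 : 0 ≤ σ₁) (h2 : 0 ≤ σ₂)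
    (hne : σ₁ ≠ σ₂) (p q : Fin n → ℝ) (hp : p ≠ 0) (hq : q ≠ 0)
    (lam₁ lam₂ : ℝ) (hlam₁ : lam₁ < 0) (hlam₂ : lam₂ < 0)
    (e₁ : ((Amat n σ₁)⁻¹ * Bmat n).mulVec p = lam₁ • p)
    (e₂ : ((Amat n σ₂)⁻¹ * Bmat n).mulVec q = lam₂ • q) :
    p ⬝ᵥ q ≠ 0 :=
  stmt8_general n hn σ₁ σ₂ h1 h2 p q hp hq lam₁ lam₂ hlam₁ hlam₂ e₁ e₂
end

section
/- Let n ≥ 3, let L be the discrete periodic Laplacian and A_σ = I − σL. Then for every σ ≥ 0, the spectral norm (operator 2-norm) of I − A_σ^{-1} satisfies ‖I − A_σ^{-1}‖ ≤ 4σ/(1 + 4σ). -/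
open Matrix Polynomial

section Aux

variable {n : ℕ} [NeZero n]

lemma fin_neg_one_val (hn : 3 ≤ n) : ((-1 : Fin n) : ℕ) = n - 1 := by
  obtain ⟨m, rfl⟩ : ∃ m, n = m + 1 := ⟨n - 1, by omega⟩
  rw [Fin.coe_neg_one]; omega

lemma fin_one_val (hn : 3 ≤ n) : ((1 : Fin n) : ℕ) = 1 := by
  rw [Fin.val_one']
  exact Nat.mod_eq_of_lt (by omega)

lemma Lmat_apply (hn : 3 ≤ n) (i j : Fin n) :
    Lmat n i j = if j = i then (-2 : ℝ) else if j = i - 1 ∨ j = i + 1 then 1 else 0 := by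
  rw [Lmat, circulant_apply]
  have h0 : ((i - j : Fin n) : ℕ) = 0 ↔ j = i := by
    rw [show (0:ℕ) = ((0 : Fin n) : ℕ) from (Fin.val_zero n).symm, Fin.val_inj,
      sub_eq_zero, eq_comm]
  have h1 : ((i - j : Fin n) : ℕ) = 1 ↔ j = i - 1 := by
    rw [show (1:ℕ) = ((1 : Fin n) : ℕ) from (fin_one_val hn).symm, Fin.val_inj]
    constructor
    · intro h; rw [← h, sub_sub_cancel]
    · intro h; rw [h, sub_sub_cancel]
  have h2 : ((i - j : Fin n) : ℕ) = n - 1 ↔ j = i + 1 := by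
    rw [show n - 1 = ((-1 : Fin n) : ℕ) from (fin_neg_one_val hn).symm, Fin.val_inj]
    constructor
    · intro h
      have hj : j = i - (i - j) := by rw [sub_sub_cancel]
      rw [hj, h, sub_neg_eq_add]
    · intro h; rw [h, sub_add_eq_sub_sub, sub_self, zero_sub]
  exact if_congr h0 rfl (if_congr (or_congr h1 h2) rfl rfl)

lemma Lmat_apply' (hn : 3 ≤ n) (i j : Fin n) :
    Lmat n i j = (if j = i then (-2 : ℝ) else 0) + (if j = i - 1 then 1 else 0)
      + (if j = i + 1 then 1 else 0) := by
  have e1 : ((1 : Fin n) : ℕ) = 1 := fin_one_val hn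
  have e2 : ((1 + 1 : Fin n) : ℕ) = 2 := by
    rw [Fin.val_add, e1]
    exact Nat.mod_eq_of_lt (by omega)
  have h10 : (1 : Fin n) ≠ 0 := by
    intro h; rw [h] at e1; simp at e1
  have hne1 : i - 1 ≠ i := by
    intro h; exact h10 (sub_eq_self.mp h)
  have hne2 : i + 1 ≠ i := by
    intro h; exact h10 (add_eq_left.mp h)
  have hne3 : i - 1 ≠ i + 1 := by
    intro h
    have h' : i = i + 1 + 1 := by rw [← h, sub_add_cancel]
    rw [add_assoc] at h'
    have h2 : (1 + 1 : Fin n) = 0 := left_eq_add.mp h'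
    rw [h2] at e2; simp at e2
  rw [Lmat_apply hn]
  by_cases hji : j = i <;> by_cases hj1 : j = i - 1 <;> by_cases hj2 : j = i + 1 <;>
    simp_all

lemma Lmat_mulVec (hn : 3 ≤ n) (x : Fin n → ℝ) (i : Fin n) :
    (Lmat n *ᵥ x) i = -2 * x i + x (i - 1) + x (i + 1) := by
  simp only [mulVec, dotProduct, Lmat_apply' hn, add_mul, ite_mul, zero_mul, one_mul]
  rw [Finset.sum_add_distrib, Finset.sum_add_distrib,
    Finset.sum_ite_eq' Finset.univ i (fun j => (-2 : ℝ) * x j),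
    Finset.sum_ite_eq' Finset.univ (i - 1) x,
    Finset.sum_ite_eq' Finset.univ (i + 1) x]
  simp

lemma sum_shift (f : Fin n → ℝ) : ∑ i, f (i + 1) = ∑ i, f i :=
  Fintype.sum_equiv (Equiv.addRight (1 : Fin n)) _ f (fun _ => rfl)

lemma quad_eq (hn : 3 ≤ n) (x : Fin n → ℝ) :
    x ⬝ᵥ (Lmat n *ᵥ x) = -∑ i, (x (i + 1) - x i) ^ 2 := by
  have hs1 : ∑ i, x (i + 1) * x i = ∑ i, x i * x (i - 1) := by
    rw [← sum_shift (fun i => x i * x (i - 1))]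
    exact Finset.sum_congr rfl fun i _ => by rw [add_sub_cancel_right]
  have hs2 : ∑ i, x (i + 1) ^ 2 = ∑ i, x i ^ 2 := sum_shift (fun i => x i ^ 2)
  have expand : x ⬝ᵥ (Lmat n *ᵥ x)
      = ∑ i, x i * (-2 * x i + x (i - 1) + x (i + 1)) := by
    simp only [dotProduct, Lmat_mulVec hn]
  rw [expand]
  have hterm : ∀ i : Fin n, x i * (-2 * x i + x (i - 1) + x (i + 1))
      = -(x (i + 1) - x i) ^ 2 + (x i * x (i - 1) - x (i + 1) * x i)
        + (x (i + 1) ^ 2 - x i ^ 2) := fun i => by ring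
  rw [Finset.sum_congr rfl fun i _ => hterm i, Finset.sum_add_distrib,
    Finset.sum_add_distrib, Finset.sum_sub_distrib, Finset.sum_sub_distrib,
    ← Finset.sum_neg_distrib]
  linarith [hs1, hs2]

lemma quad_bounds (hn : 3 ≤ n) (x : Fin n → ℝ) :
    -(4 * ∑ i, x i ^ 2) ≤ x ⬝ᵥ (Lmat n *ᵥ x) ∧ x ⬝ᵥ (Lmat n *ᵥ x) ≤ 0 := by
  have hs2 : ∑ i, x (i + 1) ^ 2 = ∑ i, x i ^ 2 := sum_shift (fun i => x i ^ 2)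
  rw [quad_eq hn]
  constructor
  · have h1 : ∑ i, (x (i + 1) - x i) ^ 2 ≤ ∑ i, (2 * x (i + 1) ^ 2 + 2 * x i ^ 2) :=
      Finset.sum_le_sum fun i _ => by nlinarith [sq_nonneg (x (i + 1) + x i)]
    have h2 : ∑ i, (2 * x (i + 1) ^ 2 + 2 * x i ^ 2) = 4 * ∑ i, x i ^ 2 := by
      rw [Finset.sum_add_distrib, ← Finset.mul_sum, ← Finset.mul_sum, hs2]; ring
    linarith
  · have h3 : (0:ℝ) ≤ ∑ i, (x (i + 1) - x i) ^ 2 :=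
      Finset.sum_nonneg fun i _ => sq_nonneg _
    linarith

end Aux

theorem stmt11 (n : ℕ) (hn : 3 ≤ n) (σ : ℝ) (hσ : 0 ≤ σ) :
    ‖Matrix.toEuclideanCLM (𝕜 := ℝ) (n := Fin n) (1 - (Amat n σ)⁻¹)‖ ≤ 4 * σ / (1 + 4 * σ) := by
  haveI : NeZero n := ⟨by omega⟩
  have hpos : (0:ℝ) < 1 + 4 * σ := by linarith
  set A := Amat n σ with hAdef
  have hL : (Lmat n).IsHermitian := by
    rw [IsHermitian, conjTranspose_eq_transpose_of_trivial]
    ext i j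
    rw [transpose_apply, Lmat_apply hn, Lmat_apply hn]
    have key : ∀ a b : Fin n, a = b - 1 ↔ b = a + 1 := by
      intro a b
      constructor <;> rintro rfl <;> simp
    have c1 : (i = j) ↔ (j = i) := eq_comm
    have c2 : (i = j - 1 ∨ i = j + 1) ↔ (j = i - 1 ∨ j = i + 1) := by
      rw [key i j, ← key j i, or_comm]
    exact if_congr c1 rfl (if_congr c2 rfl rfl)
  have hAsymm : Aᵀ = A := by
    rw [hAdef, Amat, transpose_sub, transpose_one, transpose_smul,
      ← conjTranspose_eq_transpose_of_trivial, hL]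
  have hA : A.IsHermitian := by
    rw [IsHermitian, conjTranspose_eq_transpose_of_trivial, hAsymm]
  set b := hA.eigenvectorBasis with hb
  set μ := hA.eigenvalues with hμ
  have hμint : ∀ i, 1 ≤ μ i ∧ μ i ≤ 1 + 4 * σ := by
    intro i
    set v : Fin n → ℝ := ⇑(b i) with hv
    have hnorm : ∑ j, v j ^ 2 = 1 := by
      have h1 := b.orthonormal.1 i
      rw [EuclideanSpace.norm_eq, Real.sqrt_eq_one] at h1
      simpa [Real.norm_eq_abs, sq_abs] using h1
    have hvv : v ⬝ᵥ v = 1 := by simpa [dotProduct, sq] using hnorm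
    have hμeq : μ i = v ⬝ᵥ (A *ᵥ v) := by
      simpa using hA.eigenvalues_eq i
    have hAv : A *ᵥ v = v - σ • (Lmat n *ᵥ v) := by
      rw [hAdef, Amat, sub_mulVec, one_mulVec, smul_mulVec]
    have hval : μ i = 1 - σ * (v ⬝ᵥ (Lmat n *ᵥ v)) := by
      rw [hμeq, hAv, dotProduct_sub, dotProduct_smul, hvv, smul_eq_mul]
    obtain ⟨hq1, hq2⟩ := quad_bounds hn v
    rw [hnorm] at hq1
    constructor
    · rw [hval]; nlinarith
    · rw [hval]; nlinarith
  have hdet : IsUnit A.det := by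
    rw [hA.det_eq_prod_eigenvalues, isUnit_iff_ne_zero]
    have hp : (0:ℝ) < ∏ i, μ i :=
      Finset.prod_pos fun i _ => lt_of_lt_of_le one_pos (hμint i).1
    simpa using hp.ne'
  set M := 1 - A⁻¹ with hMdef
  have hMsymm : Mᵀ = M := by
    rw [hMdef, transpose_sub, transpose_one, transpose_nonsing_inv, hAsymm]
  set lam : Fin n → ℝ := fun i => 1 - (μ i)⁻¹ with hlamdef
  have hMv : ∀ i, M *ᵥ ⇑(b i) = lam i • ⇑(b i) := by
    intro i
    have hμpos : 0 < μ i := lt_of_lt_of_le one_pos (hμint i).1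
    have h1 : A *ᵥ ⇑(b i) = μ i • ⇑(b i) := hA.mulVec_eigenvectorBasis i
    have h2 : μ i • (A⁻¹ *ᵥ ⇑(b i)) = ⇑(b i) := by
      rw [← mulVec_smul, ← h1, mulVec_mulVec, nonsing_inv_mul A hdet, one_mulVec]
    have h3 : A⁻¹ *ᵥ ⇑(b i) = (μ i)⁻¹ • ⇑(b i) := by
      calc A⁻¹ *ᵥ ⇑(b i) = (μ i)⁻¹ • (μ i • (A⁻¹ *ᵥ ⇑(b i))) := by
            rw [smul_smul, inv_mul_cancel₀ hμpos.ne', one_smul]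
        _ = (μ i)⁻¹ • ⇑(b i) := by rw [h2]
    rw [hMdef, sub_mulVec, one_mulVec, h3,
      show lam i = 1 - (μ i)⁻¹ from rfl, sub_smul, one_smul]
  have hlam : ∀ i, |lam i| ≤ 4 * σ / (1 + 4 * σ) := by
    intro i
    obtain ⟨h1, h2⟩ := hμint i
    have hμpos : (0:ℝ) < μ i := by linarith
    have hi1 : (μ i)⁻¹ ≤ 1 := by
      rw [inv_le_one_iff₀]; right; exact h1
    have hi2 : (1 + 4 * σ)⁻¹ ≤ (μ i)⁻¹ := inv_anti₀ hμpos h2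
    have hc : 1 - (1 + 4 * σ)⁻¹ = 4 * σ / (1 + 4 * σ) := by field_simp; ring
    have hcnn : (0:ℝ) ≤ 4 * σ / (1 + 4 * σ) := by positivity
    rw [abs_le]
    constructor
    · simp only [hlamdef]; linarith
    · simp only [hlamdef]; linarith
  have hinner : ∀ u w : EuclideanSpace ℝ (Fin n), (inner ℝ u w : ℝ) = ⇑u ⬝ᵥ ⇑w := by
    intro u w
    simp [PiLp.inner_apply, dotProduct, mul_comm]
  apply ContinuousLinearMap.opNorm_le_bound _ (by positivity)
  intro x
  set T := toEuclideanCLM (𝕜 := ℝ) (n := Fin n) M with hT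
  have hTapp : ∀ y : EuclideanSpace ℝ (Fin n), ⇑(T y) = M *ᵥ ⇑y := by
    intro y
    exact ofLp_toEuclideanCLM M y
  have key : ∀ i, b.repr (T x) i = lam i * b.repr x i := by
    intro i
    rw [b.repr_apply_apply, b.repr_apply_apply, hinner, hinner, hTapp,
      dotProduct_mulVec, ← hMsymm, vecMul_transpose, hMv i, smul_dotProduct,
      smul_eq_mul]
  calc ‖T x‖ = ‖b.repr (T x)‖ := (b.repr.norm_map (T x)).symm
    _ ≤ 4 * σ / (1 + 4 * σ) * ‖b.repr x‖ := by
        rw [EuclideanSpace.norm_eq, EuclideanSpace.norm_eq]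
        set c := 4 * σ / (1 + 4 * σ) with hc
        have hc0 : (0:ℝ) ≤ c := by positivity
        have hsum : ∑ i, ‖b.repr (T x) i‖ ^ 2 ≤ ∑ i, c ^ 2 * ‖b.repr x i‖ ^ 2 := by
          apply Finset.sum_le_sum
          intro i _
          rw [key i, Real.norm_eq_abs, Real.norm_eq_abs, abs_mul, mul_pow]
          exact mul_le_mul_of_nonneg_right
            (pow_le_pow_left₀ (abs_nonneg _) (hlam i) 2) (sq_nonneg _)
        refine le_trans (Real.sqrt_le_sqrt hsum) ?_
        rw [← Finset.mul_sum, Real.sqrt_mul (sq_nonneg c), Real.sqrt_sq hc0]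
    _ = 4 * σ / (1 + 4 * σ) * ‖x‖ := by rw [b.repr.norm_map]
end

section
/- Let n ≥ 3, let f : ℝⁿ → ℝ be differentiable and ℓ-smooth for some ℓ > 0, and let σ : ℕ → ℝ satisfy 0 < σ(k) ≤ C for all k and some constant C > 0. Let L be the discrete periodic Laplacian, A_σ = I − σL, and define the modified LSGD iterates x^{k+1} = x^k − (1/ℓ) A_{σ(k)}^{-1} ∇f(x^k). Then for every k ≥ 0, f(x^{k+1}) − f(x^k) ≤ −((1 + 8C)/(2(1 + 4C)² ℓ)) · ‖∇f(x^k)‖². -/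
open Matrix Polynomial

namespace Stmt12Aux

variable {n : ℕ}

lemma fin_one_val [NeZero n] (hn : 3 ≤ n) : ((1 : Fin n) : ℕ) = 1 := by
  rw [Fin.val_one']; exact Nat.mod_eq_of_lt (by omega)

lemma fin_neg_one_val [NeZero n] (hn : 3 ≤ n) : ((-1 : Fin n) : ℕ) = n - 1 := by
  rw [Fin.neg_def]
  simp only [fin_one_val hn]
  rw [Nat.mod_eq_of_lt (by omega)]

lemma Lmat_mulVec [NeZero n] (hn : 3 ≤ n) (h : Fin n → ℝ) (i : Fin n) :
    (Lmat n *ᵥ h) i = h (i - 1) + h (i + 1) - 2 * h i := by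
  set v : Fin n → ℝ := fun d =>
    if (d : ℕ) = 0 then -2 else if (d : ℕ) = 1 ∨ (d : ℕ) = n - 1 then 1 else 0 with hv
  have hmv : (Lmat n *ᵥ h) i = ∑ j, v (i - j) * h j := by
    simp [Lmat, mulVec, dotProduct, circulant_apply, hv]
  rw [hmv]
  have hre : ∑ j, v (i - j) * h j = ∑ d, v d * h (i - d) := by
    exact Fintype.sum_equiv (Equiv.subLeft i) _ _ (fun j => by simp)
  rw [hre]
  have hv1 : ((1 : Fin n) : ℕ) = 1 := fin_one_val hn
  have hvm : ((-1 : Fin n) : ℕ) = n - 1 := fin_neg_one_val hn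
  have hsub : ({0, 1, -1} : Finset (Fin n)) ⊆ Finset.univ := Finset.subset_univ _
  have hvan : ∀ d ∈ Finset.univ, d ∉ ({0, 1, -1} : Finset (Fin n)) → v d * h (i - d) = 0 := by
    intro d _ hd
    simp only [Finset.mem_insert, Finset.mem_singleton, not_or, Fin.ext_iff, hv1, hvm,
      Fin.val_zero] at hd
    simp [hv, hd.1, hd.2.1, hd.2.2]
    intro hd0
    exact absurd (by simp [hd0]) hd.1
  rw [← Finset.sum_subset hsub hvan]
  have d01 : (0 : Fin n) ≠ 1 := fun hc => by rw [Fin.ext_iff, hv1, Fin.val_zero] at hc; omega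
  have d0m : (0 : Fin n) ≠ -1 := fun hc => by rw [Fin.ext_iff, hvm, Fin.val_zero] at hc; omega
  have d1m : (1 : Fin n) ≠ -1 := fun hc => by rw [Fin.ext_iff, hv1, hvm] at hc; omega
  rw [show ({0, 1, -1} : Finset (Fin n)) = insert 0 (insert 1 {-1}) from rfl,
    Finset.sum_insert (by simp [d01, d0m]), Finset.sum_insert (by simp [d1m]),
    Finset.sum_singleton]
  have hn1 : n ≠ 1 := by omega
  have h1n : 1 % n = 1 := Nat.mod_eq_of_lt (by omega)
  have hm0 : n - 1 ≠ 0 := by omega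
  have v0 : v 0 = -2 := by simp [hv]
  have v1 : v 1 = 1 := by simp [hv, hv1, hn1, h1n]
  have vm : v (-1) = 1 := by simp [hv, hvm, hm0, hn1]
  rw [v0, v1, vm, sub_zero, sub_neg_eq_add, sub_eq_neg_add i 1, add_comm i 1]
  ring

lemma sum_shift [NeZero n] (F : Fin n → ℝ) (c : Fin n) : ∑ i, F (i + c) = ∑ i, F i :=
  Fintype.sum_equiv (Equiv.addRight c) _ _ (fun _ => rfl)

lemma sq_diff_sum [NeZero n] (h : Fin n → ℝ) :
    ∑ i, (h i - h (i + 1)) ^ 2 ≤ 4 * ∑ i, h i ^ 2 := by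
  have step : ∑ i, (h i - h (i + 1)) ^ 2 ≤ ∑ i, (2 * h i ^ 2 + 2 * h (i + 1) ^ 2) := by
    apply Finset.sum_le_sum
    intro i _
    nlinarith [sq_nonneg (h i + h (i + 1))]
  have e1 : ∑ i, (fun j => h j ^ 2) (i + 1) = ∑ i, h i ^ 2 := sum_shift (fun j => h j ^ 2) 1
  rw [Finset.sum_add_distrib, ← Finset.mul_sum, ← Finset.mul_sum] at step
  simp only at e1
  linarith [step, e1]

lemma inner_Lmat [NeZero n] (hn : 3 ≤ n) (h : Fin n → ℝ) :
    ∑ i, (Lmat n *ᵥ h) i * h i = -∑ i, (h i - h (i + 1)) ^ 2 := by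
  have e1 : ∑ i, (fun j => h j ^ 2) (i + 1) = ∑ i, h i ^ 2 := sum_shift (fun j => h j ^ 2) 1
  have e2 : ∑ i, (fun j => h (j - 1) * h j) (i + 1) = ∑ i, h (i - 1) * h i :=
    sum_shift (fun j => h (j - 1) * h j) 1
  simp only [add_sub_cancel_right] at e2
  have expand : ∑ i, ((Lmat n *ᵥ h) i * h i + (h i - h (i + 1)) ^ 2)
      = ∑ i, ((h (i - 1) * h i - h i * h (i + 1)) + ((fun j => h j ^ 2) (i + 1) - h i ^ 2)) := by
    refine Finset.sum_congr rfl fun i _ => ?_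
    rw [Lmat_mulVec hn]
    simp only
    ring
  rw [Finset.sum_add_distrib, Finset.sum_add_distrib, Finset.sum_sub_distrib,
    Finset.sum_sub_distrib] at expand
  linarith [expand, e1, e2]

lemma Lmat_sq_bound [NeZero n] (hn : 3 ≤ n) (h : Fin n → ℝ) :
    ∑ i, ((Lmat n *ᵥ h) i) ^ 2 ≤ 4 * ∑ i, (h i - h (i + 1)) ^ 2 := by
  set u : Fin n → ℝ := fun i => h i - h (i + 1) with hu
  have h1 : ∀ i, (Lmat n *ᵥ h) i = u (i - 1) - u i := by
    intro i
    rw [Lmat_mulVec hn]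
    simp only [hu, sub_add_cancel]
    ring
  have step : ∑ i, ((Lmat n *ᵥ h) i) ^ 2
      = ∑ i, ((fun j => u (j - 1)) i - (fun j => u (j - 1)) (i + 1)) ^ 2 := by
    refine Finset.sum_congr rfl fun i _ => ?_
    rw [h1]
    simp only [add_sub_cancel_right]
  rw [step]
  calc ∑ i, ((fun j => u (j - 1)) i - (fun j => u (j - 1)) (i + 1)) ^ 2
      ≤ 4 * ∑ i, ((fun j => u (j - 1)) i) ^ 2 := sq_diff_sum _
    _ = 4 * ∑ i, u i ^ 2 := by
        congr 1
        have := sum_shift (fun j => u j ^ 2) (-1)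
        simp only [← sub_eq_add_neg] at this
        exact this

lemma Amat_mulVec (s : ℝ) (h : Fin n → ℝ) (i : Fin n) :
    (Amat n s *ᵥ h) i = h i - s * (Lmat n *ᵥ h) i := by
  rw [Amat, sub_mulVec, one_mulVec]
  simp [Matrix.smul_mulVec]

lemma inner_Amat [NeZero n] (hn : 3 ≤ n) (s : ℝ) (h : Fin n → ℝ) :
    ∑ i, (Amat n s *ᵥ h) i * h i = ∑ i, h i ^ 2 + s * ∑ i, (h i - h (i + 1)) ^ 2 := by
  have : ∀ i ∈ Finset.univ, (Amat n s *ᵥ h) i * h i = h i ^ 2 - s * ((Lmat n *ᵥ h) i * h i) := by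
    intro i _
    rw [Amat_mulVec]
    ring
  rw [Finset.sum_congr rfl this, Finset.sum_sub_distrib, ← Finset.mul_sum, inner_Lmat hn]
  ring

lemma sq_Amat [NeZero n] (hn : 3 ≤ n) (s : ℝ) (h : Fin n → ℝ) :
    ∑ i, ((Amat n s *ᵥ h) i) ^ 2 ≤ ∑ i, h i ^ 2 + 2 * s * ∑ i, (h i - h (i + 1)) ^ 2
      + 4 * s ^ 2 * ∑ i, (h i - h (i + 1)) ^ 2 := by
  have expand : ∀ i ∈ Finset.univ, ((Amat n s *ᵥ h) i) ^ 2
      = h i ^ 2 - 2 * s * ((Lmat n *ᵥ h) i * h i) + s ^ 2 * ((Lmat n *ᵥ h) i) ^ 2 := by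
    intro i _
    rw [Amat_mulVec]
    ring
  rw [Finset.sum_congr rfl expand, Finset.sum_add_distrib, Finset.sum_sub_distrib,
    ← Finset.mul_sum, ← Finset.mul_sum, inner_Lmat hn]
  have hL := Lmat_sq_bound hn h
  nlinarith [sq_nonneg s, Lmat_sq_bound hn h, mul_le_mul_of_nonneg_left (Lmat_sq_bound hn h)
    (sq_nonneg s)]

lemma Amat_det_isUnit [NeZero n] (hn : 3 ≤ n) {s : ℝ} (hs : 0 < s) : IsUnit (Amat n s).det := by
  rw [isUnit_iff_ne_zero]
  intro hdet
  obtain ⟨v, hv0, hAv⟩ := (Matrix.exists_mulVec_eq_zero_iff).2 hdet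
  have h1 := inner_Amat hn s v
  rw [hAv] at h1
  simp only [Pi.zero_apply, zero_mul, Finset.sum_const_zero] at h1
  obtain ⟨j, hj⟩ := Function.ne_iff.1 hv0
  have hN : 0 < ∑ i, v i ^ 2 :=
    Finset.sum_pos' (fun i _ => sq_nonneg _)
      ⟨j, Finset.mem_univ j, pow_two_pos_of_ne_zero hj⟩
  have hq : 0 ≤ ∑ i, (v i - v (i + 1)) ^ 2 := Finset.sum_nonneg fun i _ => sq_nonneg _
  nlinarith

lemma key_scalar {C s N q : ℝ} (hC : 0 < C) (hs : 0 < s) (hsC : s ≤ C) (hq : 0 ≤ q)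
    (hqN : q ≤ 4 * N) :
    (1 + 8 * C) / (2 * (1 + 4 * C) ^ 2) * (N + 2 * s * q + 4 * s ^ 2 * q) ≤ N / 2 + s * q := by
  rw [div_mul_eq_mul_div, div_le_iff₀ (by positivity)]
  nlinarith [mul_nonneg (mul_nonneg (by linarith : (0:ℝ) ≤ 4 * q) (by linarith : (0:ℝ) ≤ C - s))
      (by positivity : (0:ℝ) ≤ C + s + 8 * s * C),
    mul_nonneg (by positivity : (0:ℝ) ≤ 4 * C ^ 2) (by linarith : (0:ℝ) ≤ 4 * N - q)]

lemma clm_apply [NeZero n] (M : Matrix (Fin n) (Fin n) ℝ) (y : EuclideanSpace ℝ (Fin n))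
    (i : Fin n) : (Matrix.toEuclideanCLM (𝕜 := ℝ) (n := Fin n) M y) i = (M *ᵥ fun j => y j) i :=
  rfl

open RealInnerProductSpace in
lemma einner (u v : EuclideanSpace ℝ (Fin n)) : ⟪u, v⟫ = ∑ i, u i * v i := by
  simp [PiLp.inner_apply, RCLike.inner_apply, conj_trivial]
  exact Finset.sum_congr rfl fun i _ => mul_comm _ _

lemma enorm (u : EuclideanSpace ℝ (Fin n)) : ‖u‖ ^ 2 = ∑ i, u i ^ 2 := by
  rw [← real_inner_self_eq_norm_sq, einner]
  exact Finset.sum_congr rfl fun i _ => (sq (u i)).symm ▸ rfl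

end Stmt12Aux

open Stmt12Aux in
open RealInnerProductSpace in
theorem stmt12 (n : ℕ) (hn : 3 ≤ n) (f : EuclideanSpace ℝ (Fin n) → ℝ)
    (hf : Differentiable ℝ f) (ℓ : ℝ) (hℓ : 0 < ℓ)
    -- `f` is `ℓ`-smooth:
    (hsmooth : ∀ x y : EuclideanSpace ℝ (Fin n),
      f y ≤ f x + ⟪gradient f x, y - x⟫ + (ℓ / 2) * ‖x - y‖ ^ 2)
    (C : ℝ) (hC : 0 < C) (σ : ℕ → ℝ) (hσ : ∀ k, 0 < σ k ∧ σ k ≤ C)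
    -- the modified LSGD iterates `x^{k+1} = x^k - (1/ℓ) A_{σ(k)}⁻¹ ∇f(x^k)`:
    (x : ℕ → EuclideanSpace ℝ (Fin n))
    (hrec : ∀ k, x (k + 1) = x k - (1 / ℓ) •
      (Matrix.toEuclideanCLM (𝕜 := ℝ) (n := Fin n) ((Amat n (σ k))⁻¹)) (gradient f (x k))) :
    ∀ k, f (x (k + 1)) - f (x k)
      ≤ -((1 + 8 * C) / (2 * (1 + 4 * C) ^ 2 * ℓ)) * ‖gradient f (x k)‖ ^ 2 := by
  haveI : NeZero n := ⟨by omega⟩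
  intro k
  obtain ⟨hs0, hsC⟩ := hσ k
  set s : ℝ := σ k with hs
  set g : EuclideanSpace ℝ (Fin n) := gradient f (x k) with hg
  set h : EuclideanSpace ℝ (Fin n) :=
    Matrix.toEuclideanCLM (𝕜 := ℝ) (n := Fin n) ((Amat n s)⁻¹) g with hh
  have hdet := Amat_det_isUnit hn hs0
  -- `g = A h`
  have hMB : (Matrix.toEuclideanCLM (𝕜 := ℝ) (n := Fin n) (Amat n s)) h = g := by
    rw [hh, ← ContinuousLinearMap.mul_apply, ← _root_.map_mul, Matrix.mul_nonsing_inv _ hdet, _root_.map_one,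
      ContinuousLinearMap.one_apply]
  have hgc : ∀ i, g i = (Amat n s *ᵥ fun j => h j) i := by
    intro i
    rw [← hMB, clm_apply]
  -- basic quantities
  set N : ℝ := ∑ i, h i ^ 2 with hN
  set q : ℝ := ∑ i, (h i - h (i + 1)) ^ 2 with hq
  have hq0 : 0 ≤ q := Finset.sum_nonneg fun i _ => sq_nonneg _
  have hN0 : 0 ≤ N := Finset.sum_nonneg fun i _ => sq_nonneg _
  have hq4N : q ≤ 4 * N := sq_diff_sum _
  have hgh : ⟪g, h⟫ = N + s * q := by
    rw [einner]
    rw [show ∑ i, g i * h i = ∑ i, (Amat n s *ᵥ fun j => h j) i * h i from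
      Finset.sum_congr rfl fun i _ => by rw [hgc]]
    exact inner_Amat hn s _
  have hgsq : ‖g‖ ^ 2 ≤ N + 2 * s * q + 4 * s ^ 2 * q := by
    rw [enorm]
    rw [show ∑ i, g i ^ 2 = ∑ i, ((Amat n s *ᵥ fun j => h j) i) ^ 2 from
      Finset.sum_congr rfl fun i _ => by rw [hgc]]
    exact sq_Amat hn s _
  have hhsq : ‖h‖ ^ 2 = N := enorm h
  -- smoothness step
  have hx1 : x (k + 1) = x k - (1 / ℓ) • h := hrec k
  have hxdiff : x (k + 1) - x k = -((1 / ℓ) • h) := by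
    rw [hx1]
    abel
  have hsm := hsmooth (x k) (x (k + 1))
  rw [← hg, hxdiff, inner_neg_right, real_inner_smul_right, hgh] at hsm
  have hnorm : ‖x k - x (k + 1)‖ ^ 2 = (1 / ℓ) ^ 2 * N := by
    have : x k - x (k + 1) = (1 / ℓ) • h := by
      rw [hx1]
      abel
    rw [this, norm_smul, mul_pow, hhsq]
    simp [abs_of_pos (by positivity : (0:ℝ) < 1 / ℓ)]
  rw [hnorm] at hsm
  -- combine
  have hc2 : (0:ℝ) < (1 + 8 * C) / (2 * (1 + 4 * C) ^ 2) := by positivity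
  have hkey := key_scalar hC hs0 hsC hq0 hq4N
  have hstep1 : (1 + 8 * C) / (2 * (1 + 4 * C) ^ 2) * ‖g‖ ^ 2
      ≤ (1 + 8 * C) / (2 * (1 + 4 * C) ^ 2) * (N + 2 * s * q + 4 * s ^ 2 * q) :=
    mul_le_mul_of_nonneg_left hgsq hc2.le
  have hfinal : (1 + 8 * C) / (2 * (1 + 4 * C) ^ 2) * ‖g‖ ^ 2 ≤ N / 2 + s * q :=
    le_trans hstep1 hkey
  have hℓinv : (0:ℝ) < 1 / ℓ := by positivity
  have hmul : (1 / ℓ) * ((1 + 8 * C) / (2 * (1 + 4 * C) ^ 2) * ‖g‖ ^ 2)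
      ≤ (1 / ℓ) * (N / 2 + s * q) := mul_le_mul_of_nonneg_left hfinal hℓinv.le
  have hcoeff : (1 + 8 * C) / (2 * (1 + 4 * C) ^ 2 * ℓ) * ‖g‖ ^ 2
      = (1 / ℓ) * ((1 + 8 * C) / (2 * (1 + 4 * C) ^ 2) * ‖g‖ ^ 2) := by
    rw [mul_comm (2 * (1 + 4 * C) ^ 2) ℓ, ← div_div]
    ring
  have hsimp : ℓ / 2 * ((1 / ℓ) ^ 2 * N) = (1 / ℓ) * (N / 2) := by
    field_simp
  rw [hsimp] at hsm
  rw [neg_mul, hcoeff]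
  have e : -(1 / ℓ * (N + s * q)) + 1 / ℓ * (N / 2) = -(1 / ℓ * (N / 2 + s * q)) := by ring
  linarith [hsm, hmul, e]
end

section
/- For n = 2, let A_σ = [[1+σ, −σ], [−σ, 1+σ]] for σ ≥ 0. Let B ∈ ℝ^{2×2} be symmetric with eigenvalues μ₁ > 0 > μ₂, and let v be a unit eigenvector of B associated with μ₁. Then there exists a nonzero vector p ∈ ℝ² that is, for every σ ≥ 0, an eigenvector of A_σ^{-1}B associated with a positive eigenvalue, if and only if v ∈ span{(1,1)ᵀ} or v ∈ span{(1,−1)ᵀ}. (Equivalently: the σ-independent attraction-region subspace W of the modified LSGD has dimension 1 exactly in this case, and dimension 0 otherwise.) -/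
/-!
For every `σ`, `A_σ` fixes `(1,1)` and scales `(1,-1)` by `1 + 2σ`. A vector `p` as in the
theorem is, taking `σ = 0`, an eigenvector of `B` with a positive eigenvalue and, taking `σ = 1`,
an eigenvector of `A_1`, so it lies on one of these two lines. Since `B` is symmetric, `p` and
`v` are both orthogonal to the eigenvector `w` of the negative eigenvalue, so in the plane `v` is
a multiple of `p`. Conversely, if `v` lies on one of the two lines it is an eigenvector of
`A_σ` for every `σ`, hence of `A_σ⁻¹B` with eigenvalue `μ₁` or `μ₁ / (1 + 2σ)`.
-/

open Matrix

/-- The 2×2 Laplacian smoothing matrix `A_σ = [[1+σ, -σ], [-σ, 1+σ]]`. -/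
noncomputable def A2 (σ : ℝ) : Matrix (Fin 2) (Fin 2) ℝ := !![1 + σ, -σ; -σ, 1 + σ]

section Eigenvectors

variable {n K : Type*} [Fintype n] [Field K]

theorem dotProduct_eq_zero_of_isSymm_of_mulVec_eq_smul {B : Matrix n n K} (hB : B.IsSymm)
    {x y : n → K} {a b : K} (hab : a ≠ b) (hx : B *ᵥ x = a • x) (hy : B *ᵥ y = b • y) :
    x ⬝ᵥ y = 0 := by
  have h : a * (x ⬝ᵥ y) = b * (x ⬝ᵥ y) :=
    calc a * (x ⬝ᵥ y) = (B *ᵥ x) ⬝ᵥ y := by rw [hx, smul_dotProduct, smul_eq_mul]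
      _ = x ⬝ᵥ (B *ᵥ y) := by rw [← vecMul_transpose, hB.eq, dotProduct_mulVec]
      _ = b * (x ⬝ᵥ y) := by rw [hy, dotProduct_smul, smul_eq_mul]
  exact (mul_eq_mul_right_iff.mp h).resolve_left hab

theorem inv_mul_mulVec_eq_smul_iff [DecidableEq n] {A : Matrix n n K} (hA : IsUnit A)
    (B : Matrix n n K) (p : n → K) (l : K) : (A⁻¹ * B) *ᵥ p = l • p ↔ B *ᵥ p = l • A *ᵥ p := by
  have := hA.invertible
  rw [← mulVec_mulVec, ← mulVec_smul]
  exact ⟨fun h => by rw [← h, mulVec_mulVec, mul_inv_of_invertible, one_mulVec],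
    inv_mulVec_eq_vec⟩

end Eigenvectors

section Plane

variable {K : Type*} [Field K]

theorem mem_span_singleton_of_mul_eq_mul {x y : Fin 2 → K} (hy : y ≠ 0)
    (h : x 0 * y 1 = x 1 * y 0) : x ∈ K ∙ y := by
  rw [Submodule.mem_span_singleton]
  by_cases hy0 : y 0 = 0
  · have hy1 : y 1 ≠ 0 := fun hy1 => hy (by ext i; fin_cases i <;> simp [hy0, hy1])
    refine ⟨x 1 / y 1, ?_⟩
    ext i; fin_cases i
    · simpa [hy0, hy1, eq_comm] using h
    · simp [hy1]
  · refine ⟨x 0 / y 0, ?_⟩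
    ext i; fin_cases i
    · simp [hy0]
    · simp only [Fin.mk_one, Pi.smul_apply, smul_eq_mul]
      field_simp
      linear_combination h

theorem mem_span_singleton_of_dotProduct_eq_zero {x y w : Fin 2 → K} (hw : w ≠ 0) (hy : y ≠ 0)
    (hxw : x ⬝ᵥ w = 0) (hyw : y ⬝ᵥ w = 0) : x ∈ K ∙ y := by
  simp only [dotProduct, Fin.sum_univ_two] at hxw hyw
  refine mem_span_singleton_of_mul_eq_mul hy ?_
  have h0 : (x 0 * y 1 - x 1 * y 0) * w 0 = 0 := by linear_combination y 1 * hxw - x 1 * hyw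
  have h1 : (x 0 * y 1 - x 1 * y 0) * w 1 = 0 := by linear_combination x 0 * hyw - y 0 * hxw
  by_cases hw0 : w 0 = 0
  · have hw1 : w 1 ≠ 0 := fun hw1 => hw (by ext i; fin_cases i <;> simp [hw0, hw1])
    exact sub_eq_zero.mp ((mul_eq_zero.mp h1).resolve_right hw1)
  · exact sub_eq_zero.mp ((mul_eq_zero.mp h0).resolve_right hw0)

end Plane

theorem det_A2 (σ : ℝ) : (A2 σ).det = 1 + 2 * σ := by
  rw [A2, det_fin_two_of]; ring

theorem isUnit_A2 {σ : ℝ} (hσ : 0 ≤ σ) : IsUnit (A2 σ) := by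
  rw [isUnit_iff_isUnit_det, det_A2]
  exact (by positivity : (0 : ℝ) < 1 + 2 * σ).ne'.isUnit

theorem A2_zero : A2 0 = 1 := by
  rw [A2, one_fin_two]; norm_num

theorem A2_mulVec_of_mem_span_one_one {σ : ℝ} {v : Fin 2 → ℝ} (hv : v ∈ ℝ ∙ ![1, 1]) :
    A2 σ *ᵥ v = v := by
  obtain ⟨t, rfl⟩ := Submodule.mem_span_singleton.mp hv
  rw [mulVec_smul]
  congr 1
  ext i; fin_cases i <;> simp [A2]

theorem A2_mulVec_of_mem_span_one_neg_one {σ : ℝ} {v : Fin 2 → ℝ} (hv : v ∈ ℝ ∙ ![1, -1]) :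
    A2 σ *ᵥ v = (1 + 2 * σ) • v := by
  obtain ⟨t, rfl⟩ := Submodule.mem_span_singleton.mp hv
  rw [mulVec_smul, smul_comm]
  congr 1
  ext i; fin_cases i <;> simp [A2] <;> ring

theorem mem_span_of_A2_mulVec_eq_smul {σ c : ℝ} {p : Fin 2 → ℝ} (hσ : σ ≠ 0)
    (h : A2 σ *ᵥ p = c • p) : p ∈ ℝ ∙ ![1, 1] ∨ p ∈ ℝ ∙ ![1, -1] := by
  have e0 := congrFun h 0
  have e1 := congrFun h 1
  simp only [A2, mulVec, dotProduct, Fin.sum_univ_two, of_apply, cons_val_zero, cons_val_one,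
    Pi.smul_apply, smul_eq_mul] at e0 e1
  have hminus : (p 0 - p 1) * (1 + 2 * σ - c) = 0 := by linear_combination e0 - e1
  have hplus : (p 0 + p 1) * (1 - c) = 0 := by linear_combination e0 + e1
  rcases mul_eq_zero.mp hminus with hp | hc
  · left
    exact mem_span_singleton_of_mul_eq_mul (by simp) (by simp; linarith)
  rcases mul_eq_zero.mp hplus with hp | hc'
  · right
    exact mem_span_singleton_of_mul_eq_mul (by simp) (by simp; linarith)
  · exact absurd (by linarith) hσ

theorem stmt18 (B : Matrix (Fin 2) (Fin 2) ℝ) (hBsymm : B.IsSymm)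
    (μ₁ μ₂ : ℝ) (hμ₁ : 0 < μ₁) (hμ₂ : μ₂ < 0)
    -- `v` is a unit eigenvector of `B` associated with the positive eigenvalue `μ₁`:
    (v : Fin 2 → ℝ) (hv : B.mulVec v = μ₁ • v) (hvunit : v 0 ^ 2 + v 1 ^ 2 = 1)
    -- and `μ₂ < 0` is an eigenvalue of `B`:
    (w : Fin 2 → ℝ) (hw0 : w ≠ 0) (hw : B.mulVec w = μ₂ • w) :
    -- there is a nonzero vector that is, for every `σ ≥ 0`, an eigenvector of
    -- `A_σ⁻¹B` associated with a positive eigenvalue, iff `v ∈ span{(1,1)ᵀ}` or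
    -- `v ∈ span{(1,-1)ᵀ}`:
    (∃ p : Fin 2 → ℝ, p ≠ 0 ∧ ∀ σ : ℝ, 0 ≤ σ → ∃ lam : ℝ, 0 < lam ∧
        ((A2 σ)⁻¹ * B).mulVec p = lam • p) ↔
      (v ∈ Submodule.span ℝ {![(1 : ℝ), 1]} ∨ v ∈ Submodule.span ℝ {![(1 : ℝ), -1]}) := by
  constructor
  · rintro ⟨p, hp0, hp⟩
    obtain ⟨l₀, hl₀, hBp⟩ := hp 0 le_rfl
    rw [A2_zero, inv_one, one_mul] at hBp
    obtain ⟨l₁, hl₁, hp₁⟩ := hp 1 zero_le_one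
    rw [inv_mul_mulVec_eq_smul_iff (isUnit_A2 zero_le_one), hBp] at hp₁
    have hA : A2 1 *ᵥ p = (l₀ / l₁) • p := by
      rw [div_eq_inv_mul, mul_smul, hp₁, inv_smul_smul₀ hl₁.ne']
    have hvp : v ∈ ℝ ∙ p := mem_span_singleton_of_dotProduct_eq_zero hw0 hp0
      (dotProduct_eq_zero_of_isSymm_of_mulVec_eq_smul hBsymm (by linarith) hv hw)
      (dotProduct_eq_zero_of_isSymm_of_mulVec_eq_smul hBsymm (by linarith) hBp hw)
    exact (mem_span_of_A2_mulVec_eq_smul one_ne_zero hA).imp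
      (Submodule.mem_span_singleton_trans hvp) (Submodule.mem_span_singleton_trans hvp)
  · have hv0 : v ≠ 0 := by
      rintro rfl
      simp at hvunit
    rintro (h | h)
    · refine ⟨v, hv0, fun σ hσ => ⟨μ₁, hμ₁, ?_⟩⟩
      rw [inv_mul_mulVec_eq_smul_iff (isUnit_A2 hσ), A2_mulVec_of_mem_span_one_one h, hv]
    · refine ⟨v, hv0, fun σ hσ => ?_⟩
      have hσ' : 0 < 1 + 2 * σ := by positivity
      refine ⟨μ₁ / (1 + 2 * σ), by positivity, ?_⟩
      rw [inv_mul_mulVec_eq_smul_iff (isUnit_A2 hσ), A2_mulVec_of_mem_span_one_neg_one h, hv,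
        smul_smul, div_mul_cancel₀ _ hσ'.ne']
end
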